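/- arXiv:2304.05782 — 4 statements merged into one kernel-verified Lean document; each statement's English description precedes it below -/
import Mathlib

section
/- If every coordinate a_k of a = (a_1, ..., a_m) lies in ∂A_r = {z : |z| = 1 or |z| = r}, then a is a peak point of the closed polyannulus (closure of A_r)^m: the product of suitable one-variable peaking functions f_{θ_k}(z) = e^{iθ_k}/(2e^{iθ_k} - z) or g_{φ_k}(z) = re^{iφ_k}/(2z - re^{iφ_k}) peaks at a. -/
/-!
At a point `b` of the outer circle, `w ↦ b / (2b - w)` peaks on the closed annulus at `b`, and
at a point `b` of the inner circle so does `w ↦ b / (2w - b)`: in both cases the denominator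
has norm `> ‖b‖` away from `b`, by strict convexity of the norm (`2b = (2b - w) + w`). The
product of these one-variable peak functions, one per coordinate, peaks at `a`, since each factor
has modulus `≤ 1` and the factor of a coordinate where `z k ≠ a k` has modulus `< 1`.
-/

open Complex Set

theorem norm_lt_norm_two_smul_sub {E : Type*} [NormedAddCommGroup E] [NormedSpace ℝ E]
    [StrictConvexSpace ℝ E] {b w : E} (hwb : ‖w‖ ≤ ‖b‖) (hne : w ≠ b) :
    ‖b‖ < ‖(2 : ℝ) • b - w‖ := by
  by_contra! hle
  have h2b : ‖(2 : ℝ) • b‖ = 2 * ‖b‖ := by rw [norm_smul, Real.norm_two]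
  have htri := norm_le_norm_sub_add ((2 : ℝ) • b) w
  have hx : ‖(2 : ℝ) • b - w‖ = ‖w‖ := by linarith
  have hsum : ‖((2 : ℝ) • b - w) + w‖ = ‖(2 : ℝ) • b - w‖ + ‖w‖ := by
    rw [sub_add_cancel]; linarith
  have heq := eq_of_norm_eq_of_norm_add_eq hx hsum
  rw [two_smul] at heq
  exact hne (by linear_combination (norm := module) (-(1 / 2 : ℝ)) • heq)

theorem Complex.norm_lt_norm_two_mul_sub {b w : ℂ} (hwb : ‖w‖ ≤ ‖b‖) (hne : w ≠ b) :
    ‖b‖ < ‖2 * b - w‖ := by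
  simpa using norm_lt_norm_two_smul_sub hwb hne

def IsPeakFunction {X : Type*} (f : X → ℂ) (K : Set X) (a : X) : Prop :=
  f a = 1 ∧ ∀ z ∈ K, z ≠ a → ‖f z‖ < 1

theorem isPeakFunction_prod_pi {ι : Type*} [Fintype ι] {X : ι → Type*} {f : ∀ i, X i → ℂ}
    {K : ∀ i, Set (X i)} {a : ∀ i, X i} (h : ∀ i, IsPeakFunction (f i) (K i) (a i)) :
    IsPeakFunction (fun z => ∏ i, f i (z i)) (univ.pi K) a := by
  classical
  refine ⟨by simp [fun i => (h i).1], fun z hz hne => ?_⟩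
  obtain ⟨i, hi⟩ := Function.ne_iff.mp hne
  have hle : ∀ j, ‖f j (z j)‖ ≤ 1 := fun j => by
    rcases eq_or_ne (z j) (a j) with hj | hj
    · simp [hj, (h j).1]
    · exact ((h j).2 _ (hz j (mem_univ j)) hj).le
  rw [norm_prod, ← Finset.mul_prod_erase _ _ (Finset.mem_univ i)]
  exact mul_lt_one_of_nonneg_of_lt_one_left (norm_nonneg _) ((h i).2 _ (hz i (mem_univ i)) hi)
    (Finset.prod_le_one (fun _ _ => norm_nonneg _) fun j _ => hle j)

theorem differentiableOn_and_isPeakFunction_div {E : Type*} [NormedAddCommGroup E]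
    [NormedSpace ℂ E] {K : Set E} {a : E} {b : ℂ} {d : E → ℂ} (hb : b ≠ 0)
    (hd : DifferentiableOn ℂ d K) (hda : d a = b)
    (hlt : ∀ z ∈ K, z ≠ a → ‖b‖ < ‖d z‖) :
    DifferentiableOn ℂ (fun z => b / d z) K ∧ IsPeakFunction (fun z => b / d z) K a := by
  have hd0 : ∀ z ∈ K, d z ≠ 0 := fun z hz => by
    rcases eq_or_ne z a with rfl | hza
    · rwa [hda]
    · exact norm_pos_iff.mp ((norm_nonneg b).trans_lt (hlt z hz hza))
  refine ⟨((hd.inv hd0).const_mul b).congr fun z _ => div_eq_mul_inv _ _, by simp [hda, hb],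
    fun z hz hza => ?_⟩
  have := hlt z hz hza
  rwa [norm_div, div_lt_one ((norm_nonneg b).trans_lt this)]

theorem exists_peakFunction_annulus {r : ℝ} (hr : 0 < r) {b : ℂ} (hb : ‖b‖ = 1 ∨ ‖b‖ = r) :
    ∃ g : ℂ → ℂ, DifferentiableOn ℂ g {w | r ≤ ‖w‖ ∧ ‖w‖ ≤ 1} ∧
      IsPeakFunction g {w | r ≤ ‖w‖ ∧ ‖w‖ ≤ 1} b := by
  have hb0 : b ≠ 0 := norm_pos_iff.mp (by rcases hb with h | h <;> rw [h] <;> positivity)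
  rcases hb with hb1 | hbr
  · refine ⟨_, differentiableOn_and_isPeakFunction_div (d := fun w => 2 * b - w) hb0
      (by fun_prop) (by ring) fun w hw hwb => ?_⟩
    exact norm_lt_norm_two_mul_sub (hb1 ▸ hw.2) hwb
  · refine ⟨_, differentiableOn_and_isPeakFunction_div (d := fun w => 2 * w - b) hb0
      (by fun_prop) (by ring) fun w hw hwb => ?_⟩
    exact (hbr ▸ hw.1).trans_lt (norm_lt_norm_two_mul_sub (hbr ▸ hw.1) hwb.symm)

theorem differentiableOn_prod_pi {ι : Type*} [Fintype ι] {g : ι → ℂ → ℂ} {K : ι → Set ℂ}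
    (hg : ∀ i, DifferentiableOn ℂ (g i) (K i)) :
    DifferentiableOn ℂ (fun z : ι → ℂ => ∏ i, g i (z i)) (univ.pi K) := by
  classical
  intro z hz
  have hgi (i : ι) : DifferentiableWithinAt ℂ (fun z : ι → ℂ => g i (z i)) (univ.pi K) z :=
    (hg i (z i) (hz i (mem_univ i))).comp z (differentiableWithinAt_apply i z _)
      fun _ hw => hw i (mem_univ i)
  exact (HasFDerivWithinAt.finsetProd fun i _ => (hgi i).hasFDerivWithinAt).differentiableWithinAt

theorem stmt_5_general (r : ℝ) (hr0 : 0 < r) (m : ℕ)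
    (a : Fin m → ℂ) (ha : ∀ k, ‖a k‖ = 1 ∨ ‖a k‖ = r) :
    ∃ f : (Fin m → ℂ) → ℂ,
      ContinuousOn f {z : Fin m → ℂ | ∀ k, r ≤ ‖z k‖ ∧ ‖z k‖ ≤ 1} ∧
      DifferentiableOn ℂ f {z : Fin m → ℂ | ∀ k, r < ‖z k‖ ∧ ‖z k‖ < 1} ∧
      f a = 1 ∧
      (∀ z : Fin m → ℂ, (∀ k, r ≤ ‖z k‖ ∧ ‖z k‖ ≤ 1) → z ≠ a → ‖f z‖ < 1) := by
  choose g hg_diff hg_peak using fun k => exists_peakFunction_annulus hr0 (ha k)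
  have hK : {z : Fin m → ℂ | ∀ k, r ≤ ‖z k‖ ∧ ‖z k‖ ≤ 1} =
      univ.pi fun _ => {w : ℂ | r ≤ ‖w‖ ∧ ‖w‖ ≤ 1} := by
    ext; simp
  have hdiff := differentiableOn_prod_pi hg_diff
  obtain ⟨hfa, hlt⟩ := isPeakFunction_prod_pi hg_peak
  refine ⟨_, hK ▸ hdiff.continuousOn, hdiff.mono fun z hz k _ => ⟨(hz k).1.le, (hz k).2.le⟩,
    hfa, fun z hz => hlt z (hK ▸ hz)⟩

/-- If every coordinate of a = (a_1, ..., a_m) lies in ∂A_r = {z : |z| = 1 or |z| = r},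
then a is a peak point of the closed polyannulus (closure A_r)^m: there is a function
continuous on the closed polyannulus, holomorphic on the open polyannulus, equal to 1 at a
and of modulus < 1 at every other point of the closed polyannulus. -/
theorem stmt_5 (r : ℝ) (hr0 : 0 < r) (hr1 : r < 1) (m : ℕ) (hm : 1 ≤ m)
    (a : Fin m → ℂ) (ha : ∀ k, ‖a k‖ = 1 ∨ ‖a k‖ = r) :
    ∃ f : (Fin m → ℂ) → ℂ,
      ContinuousOn f {z : Fin m → ℂ | ∀ k, r ≤ ‖z k‖ ∧ ‖z k‖ ≤ 1} ∧
      DifferentiableOn ℂ f {z : Fin m → ℂ | ∀ k, r < ‖z k‖ ∧ ‖z k‖ < 1} ∧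
      f a = 1 ∧
      (∀ z : Fin m → ℂ, (∀ k, r ≤ ‖z k‖ ∧ ‖z k‖ ≤ 1) → z ≠ a → ‖f z‖ < 1) :=
  stmt_5_general r hr0 m a ha
end

section
/- If T is a bounded invertible normal operator on a complex Hilbert space with σ(T) ⊆ {z : |z| = 1 or |z| = r}, then there is an orthogonal decomposition H = H_1 ⊕ H_2 into reducing subspaces for T such that T restricted to H_1 is unitary and (1/r)·T restricted to H_2 is unitary. -/
/-!
The spectrum lies on the two circles of radius `1` and `r`, so the indicator of
`{z | (1 + r) / 2 < ‖z‖}` is continuous on it and its continuous functional calculus `p` is an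
orthogonal projection commuting with `T` and `T†`. On the spectrum
`|z|² = r² + (1 - r²) · 1_{(1 + r) / 2 < |z|}`, so `T† T = r² + (1 - r²) p`: this gives
`‖T x‖ = ‖x‖` on `H₁ = range p` and `‖T x‖ = r ‖x‖` on `H₁ᗮ = ker p`. Both subspaces are mapped
onto themselves because `T⁻¹` commutes with `p` as well.
-/

open ContinuousLinearMap

lemma ne_one_add_div_two_of_eq_one_or_eq {r t : ℝ} (hr : r < 1) (ht : t = 1 ∨ t = r) :
    t ≠ (1 + r) / 2 := by
  rcases ht with rfl | rfl <;> linarith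

lemma continuousOn_ite_lt_norm {c : ℝ} {s : Set ℂ} (hs : ∀ z ∈ s, ‖z‖ ≠ c) :
    ContinuousOn (fun z : ℂ => if c < ‖z‖ then (1 : ℂ) else 0) s := by
  refine fun z hz => ContinuousAt.continuousWithinAt ?_
  rcases (hs z hz).lt_or_gt with h | h
  · refine continuousAt_const.congr (f := fun _ => (0 : ℂ)) ?_
    filter_upwards [(isOpen_lt continuous_norm continuous_const).mem_nhds h] with w hw
    simp [not_lt.2 hw.le]
  · refine continuousAt_const.congr (f := fun _ => (1 : ℂ)) ?_
    filter_upwards [(isOpen_lt continuous_const continuous_norm).mem_nhds h] with w hw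
    simp [hw]

section CStarAlgebra

variable {A : Type*} [CStarAlgebra A]

noncomputable def spectralProjOutsideBall (c : ℝ) (a : A) : A :=
  cfc (fun z : ℂ => if c < ‖z‖ then (1 : ℂ) else 0) a

variable {c : ℝ} {a : A}

lemma isStarProjection_spectralProjOutsideBall [IsStarNormal a]
    (hc : ∀ z ∈ spectrum ℂ a, ‖z‖ ≠ c) :
    IsStarProjection (spectralProjOutsideBall c a) := by
  refine isStarProjection_iff_spectrum_subset_and_isStarNormal.2 ⟨?_, by
    unfold spectralProjOutsideBall; infer_instance⟩
  rw [spectralProjOutsideBall, cfc_map_spectrum _ a (hf := continuousOn_ite_lt_norm hc)]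
  rintro _ ⟨z, -, rfl⟩
  by_cases h : c < ‖z‖ <;> simp [h]

lemma Commute.spectralProjOutsideBall {b : A} (h₁ : Commute a b) (h₂ : Commute (star a) b) :
    Commute (spectralProjOutsideBall c a) b :=
  h₁.cfc h₂ _

lemma star_mul_self_eq_of_spectrum_subset [IsStarNormal a] {r : ℝ} (hr : r < 1)
    (hspec : spectrum ℂ a ⊆ {z : ℂ | ‖z‖ = 1 ∨ ‖z‖ = r}) :
    star a * a = algebraMap ℂ A ((r : ℂ) ^ 2)
      + (1 - (r : ℂ) ^ 2) • spectralProjOutsideBall ((1 + r) / 2) a := by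
  have hf := continuousOn_ite_lt_norm fun z hz =>
    ne_one_add_div_two_of_eq_one_or_eq hr (hspec hz)
  rw [spectralProjOutsideBall, ← cfc_const_mul _ _ a hf, ← cfc_const_add _ _ a,
    ← cfc_star_id (R := ℂ) a]
  nth_rw 2 [← cfc_id' ℂ a]
  rw [← cfc_mul (star · : ℂ → ℂ) (fun z => z) a]
  refine cfc_congr fun z hz => ?_
  rw [RCLike.star_def, RCLike.conj_mul]
  rcases hspec hz with h | h
  · simp [h, show (1 + r) / 2 < 1 by linarith]
  · simp [h, show ¬(1 + r) / 2 < r by linarith]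

end CStarAlgebra

lemma norm_apply_eq_of_adjoint_apply_self {𝕜 E F : Type*} [RCLike 𝕜] [NormedAddCommGroup E]
    [InnerProductSpace 𝕜 E] [CompleteSpace E] [NormedAddCommGroup F] [InnerProductSpace 𝕜 F]
    [CompleteSpace F] {T : E →L[𝕜] F} {x : E} {s : ℝ} (hs : 0 ≤ s)
    (h : adjoint T (T x) = ((s ^ 2 : ℝ) : 𝕜) • x) : ‖T x‖ = s * ‖x‖ := by
  refine (sq_eq_sq₀ (norm_nonneg _) (by positivity)).1 ?_
  rw [apply_norm_sq_eq_inner_adjoint_left, comp_apply, h, inner_smul_left, RCLike.conj_ofReal,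
    inner_self_eq_norm_sq_to_K, ← RCLike.ofReal_pow, ← RCLike.ofReal_mul, RCLike.ofReal_re,
    mul_pow]

lemma Submodule.surjOn_of_map_eq {R M : Type*} [Semiring R] [AddCommMonoid M] [Module R M]
    {f : M →ₗ[R] M} {K : Submodule R M} (h : K.map f = K) : Set.SurjOn f K K := by
  intro y hy
  rw [← h] at hy
  exact hy

/-- An invertible bounded normal operator with spectrum in {|z| = 1} ∪ {|z| = r} decomposes
orthogonally as H = H₁ ⊕ H₁ᗮ into reducing subspaces on which T is respectively unitary and
r times a unitary. -/
theorem stmt_7 {H : Type*} [NormedAddCommGroup H] [InnerProductSpace ℂ H] [CompleteSpace H]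
    (r : ℝ) (hr0 : 0 < r) (hr1 : r < 1) (T : H →L[ℂ] H) (hT : IsStarNormal T)
    (hinv : IsUnit T) (hspec : spectrum ℂ T ⊆ {z : ℂ | ‖z‖ = 1 ∨ ‖z‖ = r}) :
    ∃ H₁ : Submodule ℂ H, IsClosed (H₁ : Set H) ∧
      (∀ x ∈ H₁, T x ∈ H₁) ∧ (∀ x ∈ H₁ᗮ, T x ∈ H₁ᗮ) ∧
      (∀ x ∈ H₁, adjoint T x ∈ H₁) ∧ (∀ x ∈ H₁ᗮ, adjoint T x ∈ H₁ᗮ) ∧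
      (∀ x ∈ H₁, ‖T x‖ = ‖x‖) ∧ Set.SurjOn T H₁ H₁ ∧
      (∀ x ∈ H₁ᗮ, ‖T x‖ = r * ‖x‖) ∧ Set.SurjOn T H₁ᗮ H₁ᗮ := by
  set p := spectralProjOutsideBall ((1 + r) / 2) T
  have hp : IsStarProjection p := isStarProjection_spectralProjOutsideBall fun z hz =>
    ne_one_add_div_two_of_eq_one_or_eq hr1 (hspec hz)
  have hpT : Commute p T := .spectralProjOutsideBall (.refl T) (star_comm_self' T)
  have hpT' : Commute p (adjoint T) :=
    .spectralProjOutsideBall (star_comm_self' T).symm (.refl (star T))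
  have hTT (x : H) : adjoint T (T x) = (r : ℂ) ^ 2 • x + (1 - (r : ℂ) ^ 2) • p x := by
    simpa [star_eq_adjoint, Algebra.algebraMap_eq_smul_one] using
      congr($(star_mul_self_eq_of_spectrum_subset hr1 hspec) x)
  obtain ⟨hT_range, hT_ker⟩ := hp.isIdempotentElem.commute_iff.1 hpT
  obtain ⟨hT'_range, hT'_ker⟩ := hp.isIdempotentElem.commute_iff.1 hpT'
  obtain ⟨hT_map_range, hT_map_ker⟩ :=
    (hp.isIdempotentElem.commute_iff_of_isUnit hinv).1 hpT
  have horth : (p : H →ₗ[ℂ] H).rangeᗮ = (p : H →ₗ[ℂ] H).ker :=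
    hp.isSelfAdjoint.isStarNormal.orthogonal_range
  refine ⟨(p : H →ₗ[ℂ] H).range, hp.isIdempotentElem.isClosed_range, hT_range, horth ▸ hT_ker,
    hT'_range, horth ▸ hT'_ker, fun x hx => ?_, Submodule.surjOn_of_map_eq hT_map_range,
    fun x hx => ?_, horth ▸ Submodule.surjOn_of_map_eq hT_map_ker⟩
  · have hpx : p x = x := (LinearMap.IsIdempotentElem.mem_range_iff
      hp.isIdempotentElem.toLinearMap).1 hx
    simpa using norm_apply_eq_of_adjoint_apply_self zero_le_one
      (by rw [hTT, hpx, ← add_smul]; simp)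
  · have hpx : p x = 0 := by rwa [horth] at hx
    exact norm_apply_eq_of_adjoint_apply_self hr0.le (by simp [hTT, hpx])
end

section
/- For every w in the annulus A_r = {z : r < |z| < 1}, the value of the Szegő-type kernel at (w̄, w), namely K̂_r(w̄, w) = Σ_{n=-∞}^{∞} |w|^{2n}/(1 + r^{2n}), satisfies K̂_r(w̄, w) ≤ 1/((1 - |w|^2)(|w|^2 - r^2)). -/
/-- For w in the annulus r < |w| < 1, the kernel value K̂_r(w̄, w) = Σ_{n ∈ ℤ} |w|^{2n}/(1 + r^{2n})
converges and is at most 1/((1 - |w|²)(|w|² - r²)). -/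
theorem stmt_12 (r : ℝ) (hr0 : 0 < r) (hr1 : r < 1) (w : ℂ)
    (hw1 : r < ‖w‖) (hw2 : ‖w‖ < 1) :
    Summable (fun n : ℤ => ‖w‖ ^ (2 * n) / (1 + r ^ (2 * n))) ∧
    ∑' n : ℤ, ‖w‖ ^ (2 * n) / (1 + r ^ (2 * n)) ≤
      1 / ((1 - ‖w‖ ^ 2) * (‖w‖ ^ 2 - r ^ 2)) := by
  set a := ‖w‖ with ha
  have ha0 : 0 < a := lt_trans hr0 hw1
  set f : ℤ → ℝ := fun n => a ^ (2 * n) / (1 + r ^ (2 * n)) with hf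
  set x : ℝ := a ^ 2 with hx
  set y : ℝ := r ^ 2 with hy
  have hx0 : 0 < x := by positivity
  have hx1 : x < 1 := by nlinarith
  have hy0 : 0 < y := by positivity
  have hyx : y < x := by nlinarith
  have hq0 : 0 ≤ y / x := by positivity
  have hq1 : y / x < 1 := (div_lt_one hx0).2 hyx
  -- bound on nonnegative indices
  have g1 : ∀ n : ℕ, f n ≤ x ^ n := by
    intro n
    have h1 : (1 : ℝ) ≤ 1 + r ^ (2 * (n : ℤ)) := by
      have : (0:ℝ) < r ^ (2 * (n : ℤ)) := zpow_pos hr0 _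
      linarith
    have h2 : f n ≤ a ^ (2 * (n : ℤ)) := by
      have hnum : (0:ℝ) ≤ a ^ (2 * (n : ℤ)) := le_of_lt (zpow_pos ha0 _)
      calc f n ≤ a ^ (2 * (n : ℤ)) / 1 := by
            exact div_le_div_of_nonneg_left hnum one_pos h1 |>.trans_eq rfl
        _ = a ^ (2 * (n : ℤ)) := div_one _
    calc f n ≤ a ^ (2 * (n : ℤ)) := h2
      _ = x ^ n := by
          rw [hx, ← zpow_natCast (a ^ 2) n, ← zpow_natCast a 2, ← zpow_mul]
          norm_num
  -- bound on negative indices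
  have g2 : ∀ n : ℕ, f (-(n + 1)) ≤ (y / x) ^ (n + 1) := by
    intro n
    have hk : (0:ℝ) < r ^ (2 * (-((n : ℤ) + 1))) := zpow_pos hr0 _
    have hnum : (0:ℝ) ≤ a ^ (2 * (-((n : ℤ) + 1))) := le_of_lt (zpow_pos ha0 _)
    have h1 : f (-(n + 1)) ≤ a ^ (2 * (-((n : ℤ) + 1))) / r ^ (2 * (-((n : ℤ) + 1))) := by
      apply div_le_div_of_nonneg_left hnum hk
      linarith
    calc f (-(n + 1)) ≤ a ^ (2 * (-((n : ℤ) + 1))) / r ^ (2 * (-((n : ℤ) + 1))) := h1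
      _ = (y / x) ^ (n + 1) := by
          have hA : ∀ b : ℝ, b ≠ 0 → b ^ (2 * (-((n : ℤ) + 1))) * (b ^ 2) ^ (n + 1) = 1 := by
            intro b hb
            rw [← zpow_natCast (b ^ 2) (n + 1), ← zpow_natCast b 2, ← zpow_mul,
              ← zpow_add₀ hb]
            push_cast
            ring_nf
            norm_num
          rw [hx, hy, div_pow,
            div_eq_div_iff hk.ne' (pow_pos (pow_pos ha0 2) (n + 1)).ne',
            hA a ha0.ne', mul_comm, hA r hr0.ne']
  have hnn : ∀ n : ℤ, 0 ≤ f n := by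
    intro n
    have h1 : (0:ℝ) < 1 + r ^ (2 * n) := by
      have := zpow_pos hr0 (2 * n); linarith
    exact div_nonneg (le_of_lt (zpow_pos ha0 _)) h1.le
  have Sg1 : Summable (fun n : ℕ => x ^ n) := summable_geometric_of_lt_one hx0.le hx1
  have Sg2 : Summable (fun n : ℕ => (y / x) ^ (n + 1)) := by
    simpa [pow_succ'] using (summable_geometric_of_lt_one hq0 hq1).mul_left (y / x)
  have S1 : Summable (fun n : ℕ => f n) :=
    Summable.of_nonneg_of_le (fun n => hnn n) g1 Sg1
  have S2 : Summable (fun n : ℕ => f (-(n + 1))) :=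
    Summable.of_nonneg_of_le (fun n => hnn _) g2 Sg2
  have Sf : Summable f := Summable.of_nat_of_neg_add_one S1 S2
  refine ⟨Sf, ?_⟩
  have hsplit := tsum_of_nat_of_neg_add_one S1 S2
  rw [hsplit]
  have T1 : ∑' n : ℕ, f n ≤ (1 - x)⁻¹ := by
    calc ∑' n : ℕ, f n ≤ ∑' n : ℕ, x ^ n := Summable.tsum_le_tsum g1 S1 Sg1
      _ = (1 - x)⁻¹ := tsum_geometric_of_lt_one hx0.le hx1
  have T2 : ∑' n : ℕ, f (-(n + 1)) ≤ y / (x - y) := by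
    calc ∑' n : ℕ, f (-(n + 1)) ≤ ∑' n : ℕ, (y / x) ^ (n + 1) := Summable.tsum_le_tsum g2 S2 Sg2
      _ = (y / x) * (1 - y / x)⁻¹ := by
          simp only [pow_succ']
          rw [tsum_mul_left, tsum_geometric_of_lt_one hq0 hq1]
      _ = y / (x - y) := by
          field_simp
  have key : (1 - x)⁻¹ + y / (x - y) ≤ 1 / ((1 - x) * (x - y)) := by
    rw [inv_eq_one_div, div_add_div _ _ (by linarith : (1:ℝ) - x ≠ 0) (by linarith : x - y ≠ 0),
      div_le_div_iff₀ (by nlinarith) (by nlinarith)]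
    have hP : (0:ℝ) < (1 - x) * (x - y) := by nlinarith
    have h3 : 1 * (x - y) + (1 - x) * y ≤ 1 := by nlinarith
    nlinarith [mul_le_mul_of_nonneg_right h3 hP.le]
  calc ∑' n : ℕ, f n + ∑' n : ℕ, f (-(n + 1)) ≤ (1 - x)⁻¹ + y / (x - y) := add_le_add T1 T2
    _ ≤ 1 / ((1 - x) * (x - y)) := key
end

section
/- Let B_1, ..., B_m be pairwise doubly commuting 2×2 complex matrices (B_i B_j = B_j B_i and B_i B_j* = B_j* B_i for i ≠ j), all simultaneously upper triangular, with B_j = [[a_j, c_j],[0, b_j]]. If c_1 ≠ 0, then for every j ≠ 1 we have c_j = 0 and a_j = b_j; that is, B_j is the scalar matrix a_j·I for all j ≠ 1. -/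
open Matrix

/-- If B₁, ..., B_m are pairwise doubly commuting upper triangular 2×2 complex matrices
B_j = [[a_j, c_j],[0, b_j]] and c_{j₀} ≠ 0, then for every j ≠ j₀ we have c_j = 0 and
a_j = b_j, i.e. B_j = a_j · I. -/
theorem stmt_14 (m : ℕ) (a b c : Fin m → ℂ) (B : Fin m → Matrix (Fin 2) (Fin 2) ℂ)
    (hB : ∀ j, B j = !![a j, c j; 0, b j])
    (hcomm : ∀ i j, i ≠ j → B i * B j = B j * B i)
    (hdcomm : ∀ i j, i ≠ j → B i * (B j)ᴴ = (B j)ᴴ * B i)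
    (j₀ : Fin m) (hc : c j₀ ≠ 0) :
    ∀ j, j ≠ j₀ → c j = 0 ∧ a j = b j ∧ B j = a j • (1 : Matrix (Fin 2) (Fin 2) ℂ) := by
  intro j hj
  have h := hdcomm j j₀ hj
  rw [hB j, hB j₀] at h
  have h00 := congrFun (congrFun h 0) 0
  have h10 := congrFun (congrFun h 1) 0
  simp [Matrix.mul_apply, Fin.sum_univ_two, Matrix.conjTranspose_apply] at h00 h10
  have hcbar : (starRingEnd ℂ) (c j₀) ≠ 0 := by simpa using hc
  have hc0 : c j = 0 := by
    have : c j * (starRingEnd ℂ) (c j₀) = 0 := by linear_combination h00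
    exact (mul_eq_zero.mp this).resolve_right hcbar
  have hab : a j = b j := by
    have : (b j - a j) * (starRingEnd ℂ) (c j₀) = 0 := by linear_combination h10
    have := (mul_eq_zero.mp this).resolve_right hcbar
    exact (sub_eq_zero.mp this).symm
  refine ⟨hc0, hab, ?_⟩
  rw [hB j, hc0, ← hab]
  ext i k
  fin_cases i <;> fin_cases k <;> simp [Matrix.one_apply]
end
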